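/- arXiv:2202.00590 — 2 statements merged into one kernel-verified Lean document; each statement's English description precedes it below -/
import Mathlib

section
/- Let A = {0, a_2, ..., a_n} with 0 < a_2 < ... < a_n and gcd(a_2, ..., a_n) = 1. Then there exist a positive integer σ, non-negative integers c_1, c_2, and finite sets C_1 ⊆ [0, c_1 - 2], C_2 ⊆ [0, c_2 - 2] such that for all s ≥ σ, sA = C_1 ∪ [c_1, s·a_n - c_2] ∪ (s·a_n - C_2), the three pieces being pairwise disjoint. -/
/-!
Let `M` be the additive monoid generated by `A` and `m = max A`. As `gcd A = 1`, `M` contains all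
large integers, so `M = C ∪ [c, ∞)` with `c` minimal, whence `c - 1 ∉ M` and `C ⊆ [0, c - 2]`.
An element `x ∈ M` is a sum of at most `x` nonzero elements of `A`; padding with copies of `m`
shows `x ∈ sA` once `x ≤ (s - L) m` for a constant `L`, so the bottom of `sA` is that of `M`.
The top of `sA` is `s m` minus the bottom of `s(m - A)`, and `m - A` satisfies the same
hypotheses. For large `s` the two ranges overlap and cover `[0, s m]`.
-/

open Finset Pointwise

/-- The s-fold iterated sumset of a finite set of natural numbers; `sumset A 0 = {0}`. -/
def sumset (A : Finset ℕ) : ℕ → Finset ℕ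
  | 0 => {0}
  | s + 1 => A + sumset A s

lemma sumset_eq_nsmul (A : Finset ℕ) (s : ℕ) : sumset A s = s • A := by
  induction s with
  | zero => rfl
  | succ s ih => rw [sumset, ih, succ_nsmul']

lemma exists_finset_union_Ici_of_forall_ge_mem {S : Set ℕ} (hS : ∃ n, ∀ x ≥ n, x ∈ S) :
    ∃ (c : ℕ) (C : Finset ℕ), (∀ x ∈ C, x + 2 ≤ c) ∧ ∀ x, x ∈ S ↔ x ∈ C ∨ c ≤ x := by
  classical
  set c := Nat.find hS
  have hc : ∀ x ≥ c, x ∈ S := Nat.find_spec hS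
  have hgap : ∀ x, x + 1 = c → x ∉ S := fun x hxc hxS =>
    Nat.find_min hS (m := x) (by omega) fun y hy => by
      rcases hy.eq_or_lt with rfl | hlt
      exacts [hxS, hc y (by omega)]
  refine ⟨c, (Finset.range c).filter (· ∈ S), fun x hx => ?_, fun x => ?_⟩
  · rw [mem_filter, Finset.mem_range] at hx
    have : x + 1 ≠ c := fun h => hgap x h hx.2
    omega
  · rw [mem_filter, Finset.mem_range]
    by_cases hxc : c ≤ x
    · simp [hxc, hc x]
    · simp [hxc, Nat.lt_of_not_le hxc]

lemma disjoint_finset_Icc_image_sub {c₁ c₂ N : ℕ} {C₁ C₂ : Finset ℕ}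
    (hC₁ : ∀ x ∈ C₁, x + 2 ≤ c₁) (hC₂ : ∀ x ∈ C₂, x + 2 ≤ c₂) (hN : c₁ + c₂ ≤ N) :
    Disjoint C₁ (Icc c₁ (N - c₂)) ∧ Disjoint C₁ (C₂.image (N - ·)) ∧
      Disjoint (Icc c₁ (N - c₂)) (C₂.image (N - ·)) := by
  refine ⟨disjoint_left.2 fun x hx hI => ?_, disjoint_left.2 fun x hx hI => ?_,
    disjoint_left.2 fun x hI hx => ?_⟩
  · have := hC₁ x hx
    rw [mem_Icc] at hI
    omega
  · obtain ⟨c, hc, rfl⟩ := mem_image.1 hI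
    have := hC₁ _ hx
    have := hC₂ c hc
    omega
  · obtain ⟨c, hc, rfl⟩ := mem_image.1 hx
    have := hC₂ c hc
    rw [mem_Icc] at hI
    omega

section

variable {A : Finset ℕ} {m s x : ℕ}

lemma mem_closure_of_mem_nsmul (hx : x ∈ s • A) : x ∈ AddSubmonoid.closure (A : Set ℕ) :=
  AddSubmonoid.nsmul_subset AddSubmonoid.subset_closure (by rwa [← coe_nsmul])

lemma mem_self_nsmul_of_mem_closure (h0 : 0 ∈ A) (hx : x ∈ AddSubmonoid.closure (A : Set ℕ)) :
    x ∈ x • A := by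
  induction hx using AddSubmonoid.closure_induction with
  | mem a ha =>
    rcases Nat.eq_zero_or_pos a with rfl | ha0
    · simp
    · exact nsmul_subset_nsmul_right h0 ha0 (by simpa using ha)
  | zero => simp
  | add x y _ _ hx hy => rw [add_nsmul]; exact add_mem_add hx hy

lemma le_mul_of_mem_nsmul (hmax : ∀ a ∈ A, a ≤ m) (hx : x ∈ s • A) : x ≤ s * m := by
  induction s generalizing x with
  | zero => simp_all
  | succ s ih =>
    rw [succ_nsmul', mem_add] at hx
    obtain ⟨a, ha, y, hy, rfl⟩ := hx
    have := hmax a ha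
    have := ih hy
    rw [Nat.succ_mul]
    omega

lemma exists_forall_ge_mem_closure (hgcd : A.gcd id = 1) :
    ∃ F, ∀ x ≥ F, x ∈ AddSubmonoid.closure (A : Set ℕ) := by
  obtain ⟨F, hF⟩ := Nat.exists_mem_closure_of_ge (A : Set ℕ)
  have hunit : Nat.setGcd (A : Set ℕ) ∣ 1 :=
    hgcd ▸ Finset.dvd_gcd fun _ ha => Nat.setGcd_dvd_of_mem ha
  exact ⟨F, fun x hx => hF x hx (hunit.trans (one_dvd x))⟩

lemma exists_forall_mem_nsmul_iff_mem_closure (h0 : 0 ∈ A) (hmA : m ∈ A) (hm : 0 < m)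
    (hgcd : A.gcd id = 1) :
    ∃ L, ∀ s x, x + L * m ≤ s * m → (x ∈ s • A ↔ x ∈ AddSubmonoid.closure (A : Set ℕ)) := by
  obtain ⟨F, hF⟩ := exists_forall_ge_mem_closure hgcd
  refine ⟨F + m, fun s x hx => ⟨mem_closure_of_mem_nsmul, fun hxA => ?_⟩⟩
  induction s generalizing x with
  | zero => nlinarith
  | succ s ih =>
    rw [Nat.succ_mul] at hx
    by_cases hxF : x < F + m
    · have : F + m ≤ s + 1 := by nlinarith
      exact nsmul_subset_nsmul_right h0 (by omega) (mem_self_nsmul_of_mem_closure h0 hxA)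
    · have hx' : x - m ∈ s • A := ih (x - m) (by omega) (hF _ (by omega))
      rw [succ_nsmul', show x = m + (x - m) by omega]
      exact add_mem_add hmA hx'

lemma exists_nsmul_lower_end (h0 : 0 ∈ A) (hmA : m ∈ A) (hm : 0 < m) (hgcd : A.gcd id = 1) :
    ∃ (L c : ℕ) (C : Finset ℕ), (∀ x ∈ C, x + 2 ≤ c) ∧
      ∀ s x, x + L * m ≤ s * m → (x ∈ s • A ↔ x ∈ C ∨ c ≤ x) := by
  obtain ⟨L, hL⟩ := exists_forall_mem_nsmul_iff_mem_closure h0 hmA hm hgcd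
  obtain ⟨c, C, hC, hS⟩ :=
    exists_finset_union_Ici_of_forall_ge_mem (exists_forall_ge_mem_closure hgcd)
  exact ⟨L, c, C, hC, fun s x hx => (hL s x hx).trans (hS x)⟩

lemma nsmul_image_sub (hmax : ∀ a ∈ A, a ≤ m) (s : ℕ) :
    s • A.image (m - ·) = (s • A).image (s * m - ·) := by
  induction s with
  | zero => simp only [zero_nsmul, zero_mul, zero_tsub, image_zero]; rfl
  | succ s ih =>
    ext z
    simp only [succ_nsmul', ih, mem_add, mem_image]
    constructor
    · rintro ⟨_, ⟨a, ha, rfl⟩, _, ⟨x, hx, rfl⟩, rfl⟩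
      refine ⟨a + x, ⟨a, ha, x, hx, rfl⟩, ?_⟩
      have := hmax a ha
      have := le_mul_of_mem_nsmul hmax hx
      rw [Nat.succ_mul]
      omega
    · rintro ⟨_, ⟨a, ha, x, hx, rfl⟩, rfl⟩
      refine ⟨m - a, ⟨a, ha, rfl⟩, s * m - x, ⟨x, hx, rfl⟩, ?_⟩
      have := hmax a ha
      have := le_mul_of_mem_nsmul hmax hx
      rw [Nat.succ_mul]
      omega

lemma mem_nsmul_iff_sub_mem_nsmul_image_sub (hmax : ∀ a ∈ A, a ≤ m) (hx : x ≤ s * m) :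
    x ∈ s • A ↔ s * m - x ∈ s • A.image (m - ·) := by
  rw [nsmul_image_sub hmax, mem_image]
  refine ⟨fun h => ⟨x, h, rfl⟩, ?_⟩
  rintro ⟨y, hy, hyx⟩
  have := le_mul_of_mem_nsmul hmax hy
  rwa [show x = y by omega]

lemma gcd_image_sub_eq_one (h0 : 0 ∈ A) (hmax : ∀ a ∈ A, a ≤ m) (hgcd : A.gcd id = 1) :
    (A.image (m - ·)).gcd id = 1 := by
  refine Nat.dvd_one.1 (hgcd ▸ Finset.dvd_gcd fun a ha => ?_)
  have hm : (A.image (m - ·)).gcd id ∣ m - 0 := Finset.gcd_dvd (mem_image_of_mem _ h0)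
  have hma : (A.image (m - ·)).gcd id ∣ m - a := Finset.gcd_dvd (mem_image_of_mem _ ha)
  have := Nat.dvd_sub hm hma
  rwa [Nat.sub_zero, Nat.sub_sub_self (hmax a ha)] at this

lemma pos_of_gcd_eq_one (hmax : ∀ a ∈ A, a ≤ m) (hgcd : A.gcd id = 1) : 0 < m := by
  by_contra! h
  have : A.gcd id = 0 :=
    Finset.gcd_eq_zero_iff.2 fun a ha => Nat.eq_zero_of_le_zero ((hmax a ha).trans h)
  omega

lemma nsmul_eq_union_Icc_union_image_sub {L₁ L₂ c₁ c₂ : ℕ} {C₁ C₂ : Finset ℕ}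
    (hmax : ∀ a ∈ A, a ≤ m) (hC₁ : ∀ x ∈ C₁, x + 2 ≤ c₁) (hC₂ : ∀ x ∈ C₂, x + 2 ≤ c₂)
    (h₁ : ∀ x, x + L₁ * m ≤ s * m → (x ∈ s • A ↔ x ∈ C₁ ∨ c₁ ≤ x))
    (h₂ : ∀ y, y + L₂ * m ≤ s * m → (y ∈ s • A.image (m - ·) ↔ y ∈ C₂ ∨ c₂ ≤ y))
    (hs : (L₁ + L₂) * m + c₁ + c₂ ≤ s * m) :
    s • A = C₁ ∪ Icc c₁ (s * m - c₂) ∪ C₂.image (s * m - ·) := by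
  ext x
  simp only [mem_union, mem_Icc, mem_image]
  rw [add_mul] at hs
  by_cases hlow : x + L₁ * m + c₂ ≤ s * m
  · rw [h₁ x (by omega)]
    constructor
    · rintro (hx | hx)
      exacts [.inl (.inl hx), .inl (.inr ⟨hx, by omega⟩)]
    · rintro ((hx | hx) | ⟨c, hc, rfl⟩)
      exacts [.inl hx, .inr hx.1, absurd (hC₂ c hc) (by omega)]
  by_cases hup : x ≤ s * m
  · rw [mem_nsmul_iff_sub_mem_nsmul_image_sub hmax hup, h₂ _ (by omega)]
    constructor
    · rintro (hy | hy)
      exacts [.inr ⟨_, hy, by omega⟩, .inl (.inr ⟨by omega, by omega⟩)]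
    · rintro ((hx | hx) | ⟨c, hc, rfl⟩)
      · exact absurd (hC₁ x hx) (by omega)
      · exact .inr (by omega)
      · have := hC₂ c hc
        rw [Nat.sub_sub_self (by omega)]
        exact .inl hc
  · refine iff_of_false (fun hx => hup (le_mul_of_mem_nsmul hmax hx)) ?_
    rintro ((hx | hx) | ⟨c, hc, rfl⟩)
    · exact absurd (hC₁ x hx) (by omega)
    · omega
    · omega

end

theorem stmt8_general (A : Finset ℕ) (h0 : 0 ∈ A) (hgcd : A.gcd id = 1)
    (an : ℕ) (han : an = A.max' ⟨0, h0⟩) :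
    ∃ (σ c1 c2 : ℕ) (C1 C2 : Finset ℕ),
      0 < σ ∧
      (∀ x ∈ C1, x + 2 ≤ c1) ∧ (∀ x ∈ C2, x + 2 ≤ c2) ∧
      ∀ s ≥ σ,
        sumset A s = C1 ∪ Finset.Icc c1 (s * an - c2) ∪ C2.image (fun c => s * an - c) ∧
        Disjoint C1 (Finset.Icc c1 (s * an - c2)) ∧
        Disjoint C1 (C2.image (fun c => s * an - c)) ∧
        Disjoint (Finset.Icc c1 (s * an - c2)) (C2.image (fun c => s * an - c)) := by
  have hmax : ∀ a ∈ A, a ≤ an := fun a ha => by rw [han]; exact le_max' A a ha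
  have hanA : an ∈ A := by rw [han]; exact max'_mem A _
  have han0 : 0 < an := pos_of_gcd_eq_one hmax hgcd
  obtain ⟨L₁, c₁, C₁, hC₁, h₁⟩ := exists_nsmul_lower_end h0 hanA han0 hgcd
  obtain ⟨L₂, c₂, C₂, hC₂, h₂⟩ := exists_nsmul_lower_end (mem_image.2 ⟨an, hanA, Nat.sub_self an⟩)
    (mem_image.2 ⟨0, h0, Nat.sub_zero an⟩) han0 (gcd_image_sub_eq_one h0 hmax hgcd)
  refine ⟨(L₁ + L₂) * an + c₁ + c₂ + 1, c₁, c₂, C₁, C₂, by omega, hC₁, hC₂, fun s hs => ?_⟩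
  have hs' : (L₁ + L₂) * an + c₁ + c₂ ≤ s * an := by nlinarith
  rw [sumset_eq_nsmul,
    nsmul_eq_union_Icc_union_image_sub hmax hC₁ hC₂ (h₁ s) (h₂ s) hs']
  exact ⟨rfl, disjoint_finset_Icc_image_sub hC₁ hC₂ (by omega)⟩

theorem stmt8 (A : Finset ℕ) (h0 : 0 ∈ A) (hn : 2 ≤ A.card) (hgcd : A.gcd id = 1)
    (an : ℕ) (han : an = A.max' ⟨0, h0⟩) :
    ∃ (σ c1 c2 : ℕ) (C1 C2 : Finset ℕ),
      0 < σ ∧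
      (∀ x ∈ C1, x + 2 ≤ c1) ∧ (∀ x ∈ C2, x + 2 ≤ c2) ∧
      ∀ s ≥ σ,
        sumset A s = C1 ∪ Finset.Icc c1 (s * an - c2) ∪ C2.image (fun c => s * an - c) ∧
        Disjoint C1 (Finset.Icc c1 (s * an - c2)) ∧
        Disjoint C1 (C2.image (fun c => s * an - c)) ∧
        Disjoint (Finset.Icc c1 (s * an - c2)) (C2.image (fun c => s * an - c)) :=
  stmt8_general A h0 hgcd an han
end

section
/- Let A = {0, a_2, ..., a_n} with 0 < a_2 < ... < a_n and gcd(a_2, ..., a_n) = 1. Then there is a constant C such that for all sufficiently large s, |sA| = a_n·s + C, i.e. the function s ↦ |sA| is eventually a linear polynomial in s with leading coefficient a_n. -/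
open Finset Pointwise

lemma sumset_succ (A : Finset ℕ) (s : ℕ) : sumset A (s+1) = A + sumset A s := rfl

lemma sumset_mono_succ {A : Finset ℕ} (h0 : 0 ∈ A) (s : ℕ) :
    sumset A s ⊆ sumset A (s+1) := fun x hx => by
  have h := Finset.add_mem_add h0 hx
  rw [zero_add] at h
  exact h

lemma sumset_mono {A : Finset ℕ} (h0 : 0 ∈ A) {s t : ℕ} (hst : s ≤ t) :
    sumset A s ⊆ sumset A t := by
  induction hst with
  | refl => exact fun x hx => hx
  | step h ih => exact fun x hx => sumset_mono_succ h0 _ (ih hx)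

lemma sumset_add {A : Finset ℕ} : ∀ {p : ℕ} {q x y : ℕ}, x ∈ sumset A p → y ∈ sumset A q →
    x + y ∈ sumset A (p + q) := by
  intro p
  induction p with
  | zero =>
    intro q x y hx hy
    simp only [sumset, Finset.mem_singleton] at hx
    subst hx
    simpa using hy
  | succ p ih =>
    intro q x y hx hy
    rw [sumset_succ, Finset.mem_add] at hx
    obtain ⟨a, ha, z, hz, rfl⟩ := hx
    have e1 : a + z + y = a + (z + y) := by ring
    have e2 : p + 1 + q = (p + q) + 1 := by ring
    rw [e1, e2, sumset_succ]
    exact Finset.add_mem_add ha (ih hz hy)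

lemma sumset_mul_mem {A : Finset ℕ} {a : ℕ} (ha : a ∈ A) : ∀ k, a * k ∈ sumset A k
  | 0 => by simp [sumset]
  | k+1 => by
    have h := Finset.add_mem_add ha (sumset_mul_mem ha k)
    have e : a * (k+1) = a + a * k := by ring
    rw [e, sumset_succ]
    exact h

lemma sumset_shrink {A : Finset ℕ} (h0 : 0 ∈ A) : ∀ {s x : ℕ}, x ∈ sumset A s → x ∈ sumset A x := by
  intro s
  induction s with
  | zero =>
    intro x hx
    simp only [sumset, Finset.mem_singleton] at hx
    subst hx
    simp [sumset]
  | succ s ih =>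
    intro x hx
    rw [sumset_succ, Finset.mem_add] at hx
    obtain ⟨a, ha, y, hy, rfl⟩ := hx
    rcases Nat.eq_zero_or_pos a with h | h
    · subst h
      rw [zero_add]
      exact ih hy
    · have hy' := ih hy
      have hmem : a + y ∈ sumset A (y + 1) := by
        rw [sumset_succ]
        exact Finset.add_mem_add ha hy'
      exact sumset_mono h0 (by omega) hmem

lemma sumset_le {A : Finset ℕ} {an : ℕ} (hle : ∀ a ∈ A, a ≤ an) :
    ∀ {s x : ℕ}, x ∈ sumset A s → x ≤ an * s := by
  intro s
  induction s with
  | zero =>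
    intro x hx
    simp only [sumset, Finset.mem_singleton] at hx
    omega
  | succ s ih =>
    intro x hx
    rw [sumset_succ, Finset.mem_add] at hx
    obtain ⟨a, ha, y, hy, rfl⟩ := hx
    have h1 := hle a ha
    have h2 := ih hy
    have e : an * (s+1) = an * s + an := by ring
    omega

lemma sumset_mirror {A : Finset ℕ} {an : ℕ} (hle : ∀ a ∈ A, a ≤ an) :
    ∀ {s x : ℕ}, x ∈ sumset A s → an * s - x ∈ sumset (A.image (fun a => an - a)) s := by
  intro s
  induction s with
  | zero =>
    intro x hx
    simp only [sumset, Finset.mem_singleton] at hx ⊢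
    omega
  | succ s ih =>
    intro x hx
    rw [sumset_succ, Finset.mem_add] at hx
    obtain ⟨a, ha, y, hy, rfl⟩ := hx
    have hya : y ≤ an * s := sumset_le hle hy
    have haan : a ≤ an := hle a ha
    have e : an * (s+1) - (a + y) = (an - a) + (an * s - y) := by
      have : an * (s+1) = an * s + an := by ring
      omega
    rw [e, sumset_succ]
    exact Finset.add_mem_add (Finset.mem_image_of_mem _ ha) (ih hy)
lemma finset_bezout (A : Finset ℕ) : ∃ w : ℕ → ℤ, ∑ a ∈ A, w a * a = A.gcd id := by
  classical
  induction A using Finset.induction with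
  | empty => exact ⟨0, by simp⟩
  | @insert a s ha ih =>
    obtain ⟨w, hw⟩ := ih
    refine ⟨fun x => if x = a then Nat.gcdA a (s.gcd id) else Nat.gcdB a (s.gcd id) * w x, ?_⟩
    rw [Finset.sum_insert ha, Finset.gcd_insert]
    simp only [if_pos rfl]
    rw [Finset.sum_congr rfl (fun x hx => by
      rw [if_neg (by rintro rfl; exact ha hx)])]
    have hb := Nat.gcd_eq_gcd_ab a (s.gcd id)
    have e : ∑ x ∈ s, Nat.gcdB a (s.gcd id) * w x * x
        = Nat.gcdB a (s.gcd id) * ∑ x ∈ s, w x * x := by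
      rw [Finset.mul_sum]
      exact Finset.sum_congr rfl (fun x _ => by ring)
    rw [e, hw]
    have hg : GCDMonoid.gcd (id a) (s.gcd id) = Nat.gcd a (s.gcd id) := rfl
    rw [hg]
    push_cast [hb]
    ring

lemma sumset_combo {A : Finset ℕ} (h0 : 0 ∈ A) (c : ℕ → ℕ) :
    ∀ t : Finset ℕ, t ⊆ A → (∑ a ∈ t, c a * a) ∈ sumset A (∑ a ∈ t, c a) := by
  classical
  intro t
  induction t using Finset.induction with
  | empty => intro _; simp [sumset]
  | @insert a s ha ih =>
    intro hsub
    rw [Finset.sum_insert ha, Finset.sum_insert ha]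
    have h1 : c a * a ∈ sumset A (c a) := by
      rw [mul_comm]
      exact sumset_mul_mem (hsub (Finset.mem_insert_self a s)) (c a)
    exact sumset_add h1 (ih (fun x hx => hsub (Finset.mem_insert_of_mem hx)))

lemma sumset_frobenius {A : Finset ℕ} (h0 : 0 ∈ A) {an : ℕ} (hanA : an ∈ A) (han1 : 1 ≤ an)
    (hgcd : A.gcd id = 1) : ∃ F : ℕ, ∀ m, F ≤ m → m ∈ sumset A m := by
  classical
  obtain ⟨w, hw⟩ := finset_bezout A
  rw [hgcd] at hw
  set P := ∑ a ∈ A, (w a).toNat * a with hP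
  set N := ∑ a ∈ A, (-(w a)).toNat * a with hN
  have hPN : (P : ℤ) - N = 1 := by
    push_cast at hw
    rw [hP, hN]
    push_cast
    rw [← Finset.sum_sub_distrib, ← hw]
    refine Finset.sum_congr rfl (fun a _ => ?_)
    have h := Int.toNat_sub_toNat_neg (w a)
    nlinarith [h]
  have hPN' : P = N + 1 := by omega
  refine ⟨an * N, fun m hm => ?_⟩
  set r := (m - an * N) % an with hr
  set k := (m - an * N) / an with hk
  have hrlt : r < an := Nat.mod_lt _ (by omega)
  have hmeq : m = an * N + an * k + r := by
    rw [hk, hr]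
    have := Nat.div_add_mod (m - an * N) an
    omega
  set c : ℕ → ℕ := fun a => r * (w a).toNat + (an - r) * (-(w a)).toNat +
    (if a = an then k else 0) with hc
  have hsum : ∑ a ∈ A, c a * a = m := by
    rw [hc]
    simp only [add_mul]
    rw [Finset.sum_add_distrib, Finset.sum_add_distrib]
    have e1 : ∑ a ∈ A, r * (w a).toNat * a = r * P := by
      rw [hP, Finset.mul_sum]
      exact Finset.sum_congr rfl (fun a _ => by ring)
    have e2 : ∑ a ∈ A, (an - r) * (-(w a)).toNat * a = (an - r) * N := by
      rw [hN, Finset.mul_sum]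
      exact Finset.sum_congr rfl (fun a _ => by ring)
    have e3 : ∑ a ∈ A, (if a = an then k else 0) * a = k * an := by
      rw [Finset.sum_eq_single an]
      · simp
      · intro b _ hb; simp [hb]
      · intro h; exact absurd hanA h
    rw [e1, e2, e3, hPN']
    have h4 : (an - r) * N = an * N - r * N := Nat.sub_mul an r N
    have h5 : r * N ≤ an * N := Nat.mul_le_mul_right N (le_of_lt hrlt)
    have h6 : r * (N + 1) = r * N + r := by ring
    have h7 : k * an = an * k := mul_comm k an
    omega
  have := sumset_combo h0 c A (le_refl _)
  rw [hsum] at this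
  exact sumset_shrink h0 this

lemma sumset_fast {A : Finset ℕ} {an F : ℕ} (h0 : 0 ∈ A) (hanA : an ∈ A) (han1 : 1 ≤ an)
    (hF : ∀ m, F ≤ m → m ∈ sumset A m) {s x : ℕ} (hx : x ∈ sumset A x)
    (hs : F + an ≤ s) (hxs : x ≤ an * (s - (F + an))) : x ∈ sumset A s := by
  by_cases hxle : x ≤ s
  · exact sumset_mono h0 hxle hx
  · have hxF : F ≤ x := by omega
    set q := (x - F) / an with hq
    set t := (x - F) % an with ht
    have htlt : t < an := Nat.mod_lt _ (by omega)
    have hxeq : x = an * q + (F + t) := by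
      rw [hq, ht]
      have := Nat.div_add_mod (x - F) an
      omega
    have h1 : an * q ∈ sumset A q := sumset_mul_mem hanA q
    have h2 : F + t ∈ sumset A (F + an) :=
      sumset_mono h0 (by omega) (hF (F + t) (by omega))
    have h3 : an * q + (F + t) ∈ sumset A (q + (F + an)) := sumset_add h1 h2
    have hqle : q ≤ s - (F + an) := by
      have ha : q ≤ x / an := Nat.div_le_div_right (by omega)
      have hb : x / an ≤ (an * (s - (F + an))) / an := Nat.div_le_div_right hxs
      rw [Nat.mul_div_cancel_left _ (by omega)] at hb
      omega
    exact sumset_mono h0 (by omega) (hxeq ▸ h3)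

theorem stmt17 (A : Finset ℕ) (h0 : 0 ∈ A) (hn : 2 ≤ A.card) (hgcd : A.gcd id = 1)
    (an : ℕ) (han : an = A.max' ⟨0, h0⟩) :
    ∃ (c : ℤ) (s0 : ℕ), ∀ s ≥ s0, ((sumset A s).card : ℤ) = (an : ℤ) * s + c := by
  classical
  have hanA : an ∈ A := han ▸ A.max'_mem ⟨0, h0⟩
  have hle : ∀ a ∈ A, a ≤ an := fun a ha => han ▸ A.le_max' a ha
  have han1 : 1 ≤ an := by
    obtain ⟨b, hb, hb0⟩ := Finset.exists_mem_ne (s := A) (by omega) 0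
    have := hle b hb
    omega
  set B := A.image (fun a => an - a) with hB
  have h0B : 0 ∈ B := Finset.mem_image.2 ⟨an, hanA, by omega⟩
  have hanB : an ∈ B := Finset.mem_image.2 ⟨0, h0, by omega⟩
  have hleB : ∀ b ∈ B, b ≤ an := by
    intro b hb
    obtain ⟨a, _, rfl⟩ := Finset.mem_image.1 hb
    omega
  have hgcdB : B.gcd id = 1 := by
    have hdvd : ∀ a ∈ A, B.gcd id ∣ a := by
      intro a ha
      have ha' := hle a ha
      have h1 : B.gcd id ∣ an := Finset.gcd_dvd hanB
      have h2 : B.gcd id ∣ an - a := Finset.gcd_dvd (Finset.mem_image_of_mem _ ha)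
      have h4 := Nat.dvd_sub h1 h2
      have h5 : an - (an - a) = a := Nat.sub_sub_self (hle a ha)
      rwa [h5] at h4
    have := Finset.dvd_gcd (f := id) hdvd
    rw [hgcd] at this
    exact Nat.dvd_one.mp this
  have hBB : B.image (fun b => an - b) = A := by
    rw [hB, Finset.image_image]
    have : A.image ((fun b => an - b) ∘ (fun a => an - a)) = A.image id := by
      apply Finset.image_congr
      intro a ha
      have := hle a ha
      simp only [Function.comp, id_eq]
      omega
    rw [this, Finset.image_id]
  obtain ⟨FA, hFA⟩ := sumset_frobenius h0 hanA han1 hgcd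
  obtain ⟨FB, hFB⟩ := sumset_frobenius h0B hanB han1 hgcdB
  set C : ℕ := FA + an with hC
  set C' : ℕ := FB + an with hC'
  set Gc : ℕ := ((Finset.range FA).filter (fun x => x ∈ sumset A x)).card with hGc
  set H : ℕ := ((Finset.range (an * C)).filter (fun z => z ∈ sumset B z)).card with hH
  refine ⟨(Gc : ℤ) + H + 1 - FA - an * C, 2 * FA + FB + 2 * an, fun s hs => ?_⟩
  have hsC : C ≤ s := by omega
  have hsCC' : C + C' ≤ s := by omega
  have hmul : an * (s - C) + an * C = an * s := by
    rw [← Nat.mul_add]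
    congr 1
    omega
  have hmulC' : an * C ≤ an * (s - C') := Nat.mul_le_mul_left an (by omega)
  set L := (Finset.range (an * (s - C) + 1)).filter (fun x => x ∈ sumset A x) with hL
  set Hi := (((Finset.range (an * C)).filter (fun z => z ∈ sumset B z)).image
    (fun z => an * s - z)) with hHi
  have hset : sumset A s = L ∪ Hi := by
    ext x
    rw [Finset.mem_union, hL, hHi, Finset.mem_filter, Finset.mem_range, Finset.mem_image]
    constructor
    · intro hx
      have hxle : x ≤ an * s := sumset_le hle hx
      by_cases hcase : x ≤ an * (s - C)
      · exact Or.inl ⟨by omega, sumset_shrink h0 hx⟩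
      · refine Or.inr ⟨an * s - x, ?_, by omega⟩
        rw [Finset.mem_filter, Finset.mem_range]
        have hz : an * s - x ∈ sumset B s := by
          have := sumset_mirror hle hx
          rwa [← hB] at this
        exact ⟨by omega, sumset_shrink h0B hz⟩
    · rintro (⟨hxlt, hxS⟩ | ⟨z, hz, rfl⟩)
      · exact sumset_fast h0 hanA han1 hFA hxS (by omega) (by rw [← hC]; omega)
      · rw [Finset.mem_filter, Finset.mem_range] at hz
        obtain ⟨hzlt, hzS⟩ := hz
        have hzs : z ∈ sumset B s :=
          sumset_fast h0B hanB han1 hFB hzS (by omega) (by rw [← hC']; omega)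
        have := sumset_mirror hleB hzs
        rwa [hBB] at this
  have hdisj : Disjoint L Hi := by
    rw [Finset.disjoint_left]
    intro x hxL hxHi
    rw [hL, Finset.mem_filter, Finset.mem_range] at hxL
    rw [hHi, Finset.mem_image] at hxHi
    obtain ⟨z, hz, hzx⟩ := hxHi
    rw [Finset.mem_filter, Finset.mem_range] at hz
    omega
  have hcardHi : Hi.card = H := by
    rw [hHi, Finset.card_image_of_injOn, hH]
    intro z1 h1 z2 h2 he
    rw [Finset.coe_filter, Set.mem_setOf_eq, Finset.mem_range] at h1 h2
    simp only at he
    omega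
  have hFAle : FA ≤ an * (s - C) + 1 := by
    have : s - C ≤ an * (s - C) := Nat.le_mul_of_pos_left _ (by omega)
    omega
  have hcardL : L.card = Gc + (an * (s - C) + 1 - FA) := by
    rw [hL]
    have hsplit : Finset.range (an * (s - C) + 1)
        = Finset.range FA ∪ Finset.Ico FA (an * (s - C) + 1) := by
      rw [Finset.range_eq_Ico, Finset.range_eq_Ico, Finset.Ico_union_Ico_eq_Ico (Nat.zero_le _) hFAle]
    rw [hsplit, Finset.filter_union]
    have hfull : (Finset.Ico FA (an * (s - C) + 1)).filter (fun x => x ∈ sumset A x)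
        = Finset.Ico FA (an * (s - C) + 1) := by
      apply Finset.filter_true_of_mem
      intro x hx
      exact hFA x (Finset.mem_Ico.1 hx).1
    have hdisj2 : Disjoint ((Finset.range FA).filter (fun x => x ∈ sumset A x))
        (Finset.Ico FA (an * (s - C) + 1)) := by
      rw [Finset.disjoint_left]
      intro x hx1 hx2
      rw [Finset.mem_filter, Finset.mem_range] at hx1
      rw [Finset.mem_Ico] at hx2
      omega
    rw [hfull, Finset.card_union_of_disjoint hdisj2, hGc, Nat.card_Ico]
  rw [hset, Finset.card_union_of_disjoint hdisj, hcardL, hcardHi]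
  have h1 : FA ≤ an * (s - C) + 1 := hFAle
  push_cast [h1]
  rw [Nat.cast_sub hsC]
  ring
end
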